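/- There is a ℂ-algebra isomorphism between the ℂ-subalgebra of ℂ[X,Y,Z,W] generated by {X²Z, XYZ, Y²Z, Z²W} and the ℂ-subalgebra of ℂ[X,Y,Z] generated by {X², XY, Y², Z}, which sends X²Z ↦ X², XYZ ↦ XY, Y²Z ↦ Y², and Z²W ↦ Z. -/

import Mathlib

noncomputable section
open MvPolynomial

/-- The invariant ring of the `(ℂ*)²`-action on `ℂ⁴` with matrix
`[[1,1,1,1],[0,0,1,−1]]` linearized by `α = (3,1)`: the subalgebra of
`ℂ[X,Y,Z,W]` generated by `X²Z, XYZ, Y²Z, Z²W`.  Variables: `X = X 0`,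
`Y = X 1`, `Z = X 2`, `W = X 3`. -/
def hondaInvariantRing : Subalgebra ℂ (MvPolynomial (Fin 4) ℂ) :=
  Algebra.adjoin ℂ
    ({X 0 ^ 2 * X 2, X 0 * X 1 * X 2, X 1 ^ 2 * X 2, X 2 ^ 2 * X 3} :
      Set (MvPolynomial (Fin 4) ℂ))

/-- The homogeneous coordinate ring of `ℂP_{1,1,2}`: the subalgebra of
`ℂ[X,Y,Z]` generated by `X², XY, Y², Z`.  Variables: `X = X 0`, `Y = X 1`,
`Z = X 2`. -/
def wps112CoordRing : Subalgebra ℂ (MvPolynomial (Fin 3) ℂ) :=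
  Algebra.adjoin ℂ
    ({X 0 ^ 2, X 0 * X 1, X 1 ^ 2, X 2} : Set (MvPolynomial (Fin 3) ℂ))

def auxPhi : (Fin 4 →₀ ℕ) →+ (Fin 4 →₀ ℕ) where
  toFun s := Finsupp.single 0 (s 0) + Finsupp.single 1 (s 1) +
      Finsupp.single 2 (2 * s 2) + Finsupp.single 3 (s 3)
  map_zero' := by simp
  map_add' a b := by
    simp only [Finsupp.add_apply, Finsupp.single_add, mul_add]
    abel

def auxPsi : (Fin 3 →₀ ℕ) →+ (Fin 4 →₀ ℕ) where
  toFun s := Finsupp.single 0 (s 0) + Finsupp.single 1 (s 1) +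
      Finsupp.single 2 (s 0 + s 1 + 4 * s 2) + Finsupp.single 3 (s 2)
  map_zero' := by simp
  map_add' a b := by
    simp only [Finsupp.add_apply, Finsupp.single_add, mul_add]
    abel

lemma auxPhi_apply (s : Fin 4 →₀ ℕ) (i : Fin 4) :
    auxPhi s i = if i = 2 then 2 * s 2 else s i := by
  simp only [auxPhi, AddMonoidHom.coe_mk, ZeroHom.coe_mk, Finsupp.add_apply,
    Finsupp.single_apply]
  fin_cases i <;> simp

lemma auxPsi_apply (s : Fin 3 →₀ ℕ) (i : Fin 4) :
    auxPsi s i = if i = 0 then s 0 else if i = 1 then s 1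
      else if i = 2 then s 0 + s 1 + 4 * s 2 else s 2 := by
  simp only [auxPsi, AddMonoidHom.coe_mk, ZeroHom.coe_mk, Finsupp.add_apply,
    Finsupp.single_apply]
  fin_cases i <;> simp

lemma auxPhi_injective : Function.Injective auxPhi := by
  intro a b h
  ext i
  have hi : auxPhi a i = auxPhi b i := by rw [h]
  rw [auxPhi_apply, auxPhi_apply] at hi
  split_ifs at hi with h2
  · subst h2; omega
  · exact hi

lemma auxPsi_injective : Function.Injective auxPsi := by
  intro a b h
  have key : ∀ j : Fin 4, auxPsi a j = auxPsi b j := fun j => by rw [h]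
  have h0 := key 0
  have h1 := key 1
  have h3 := key 3
  rw [auxPsi_apply, auxPsi_apply] at h0 h1 h3
  simp at h0 h1 h3
  ext i
  fin_cases i
  · exact h0
  · exact h1
  · exact h3

def auxF : MvPolynomial (Fin 4) ℂ →ₐ[ℂ] MvPolynomial (Fin 4) ℂ :=
  AddMonoidAlgebra.mapDomainAlgHom ℂ ℂ auxPhi

def auxG : MvPolynomial (Fin 3) ℂ →ₐ[ℂ] MvPolynomial (Fin 4) ℂ :=
  AddMonoidAlgebra.mapDomainAlgHom ℂ ℂ auxPsi

lemma auxF_monomial (s : Fin 4 →₀ ℕ) (a : ℂ) :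
    auxF (monomial s a) = monomial (auxPhi s) a := by
  rw [← MvPolynomial.single_eq_monomial, ← MvPolynomial.single_eq_monomial]
  exact AddMonoidAlgebra.mapDomain_single

lemma auxG_monomial (s : Fin 3 →₀ ℕ) (a : ℂ) :
    auxG (monomial s a) = monomial (auxPsi s) a := by
  rw [← MvPolynomial.single_eq_monomial, ← MvPolynomial.single_eq_monomial]
  exact AddMonoidAlgebra.mapDomain_single

lemma X_eq_monomial {n : ℕ} (i : Fin n) :
    (X i : MvPolynomial (Fin n) ℂ) = monomial (Finsupp.single i 1) 1 := rfl

lemma auxPhi_X0 : auxPhi (Finsupp.single 0 1) = Finsupp.single 0 1 := by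
  ext j; rw [auxPhi_apply]; fin_cases j <;> simp
lemma auxPhi_X1 : auxPhi (Finsupp.single 1 1) = Finsupp.single 1 1 := by
  ext j; rw [auxPhi_apply]; fin_cases j <;> simp
lemma auxPhi_X2 : auxPhi (Finsupp.single 2 1) = Finsupp.single 2 2 := by
  ext j; rw [auxPhi_apply]; fin_cases j <;> simp [Finsupp.single_apply]
lemma auxPhi_X3 : auxPhi (Finsupp.single 3 1) = Finsupp.single 3 1 := by
  ext j; rw [auxPhi_apply]; fin_cases j <;> simp [Finsupp.single_apply]

lemma auxPsi_X0 : auxPsi (Finsupp.single 0 1) = Finsupp.single 0 1 + Finsupp.single 2 1 := by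
  ext j; rw [auxPsi_apply]; fin_cases j <;> simp [Finsupp.single_apply]
lemma auxPsi_X1 : auxPsi (Finsupp.single 1 1) = Finsupp.single 1 1 + Finsupp.single 2 1 := by
  ext j; rw [auxPsi_apply]; fin_cases j <;> simp [Finsupp.single_apply]
lemma auxPsi_X2 : auxPsi (Finsupp.single 2 1) = Finsupp.single 2 4 + Finsupp.single 3 1 := by
  ext j; rw [auxPsi_apply]; fin_cases j <;> simp [Finsupp.single_apply]

lemma auxF_X0 : auxF (X 0) = X 0 := by
  rw [X_eq_monomial, auxF_monomial, auxPhi_X0]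
lemma auxF_X1 : auxF (X 1) = X 1 := by
  rw [X_eq_monomial, auxF_monomial, auxPhi_X1]
lemma auxF_X2 : auxF (X 2) = X 2 ^ 2 := by
  rw [X_pow_eq_monomial, X_eq_monomial, auxF_monomial, auxPhi_X2]
lemma auxF_X3 : auxF (X 3) = X 3 := by
  rw [X_eq_monomial, auxF_monomial, auxPhi_X3]

lemma auxG_X0 : auxG (X 0) = X 0 * X 2 := by
  rw [X_eq_monomial, auxG_monomial, auxPsi_X0, X_eq_monomial, X_eq_monomial,
    monomial_mul, one_mul]
lemma auxG_X1 : auxG (X 1) = X 1 * X 2 := by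
  rw [X_eq_monomial, auxG_monomial, auxPsi_X1, X_eq_monomial, X_eq_monomial,
    monomial_mul, one_mul]
lemma auxG_X2 : auxG (X 2) = X 2 ^ 4 * X 3 := by
  rw [X_pow_eq_monomial, X_eq_monomial (i := (3 : Fin 4)), monomial_mul, one_mul,
    X_eq_monomial, auxG_monomial, auxPsi_X2]

lemma auxF_gen1 : auxF (X 0 ^ 2 * X 2) = X 0 ^ 2 * X 2 ^ 2 := by
  simp [auxF_X0, auxF_X2]
lemma auxF_gen2 : auxF (X 0 * X 1 * X 2) = X 0 * X 1 * X 2 ^ 2 := by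
  simp [auxF_X0, auxF_X1, auxF_X2]
lemma auxF_gen3 : auxF (X 1 ^ 2 * X 2) = X 1 ^ 2 * X 2 ^ 2 := by
  simp [auxF_X1, auxF_X2]
lemma auxF_gen4 : auxF (X 2 ^ 2 * X 3) = X 2 ^ 4 * X 3 := by
  rw [map_mul, map_pow, auxF_X2, auxF_X3, ← pow_mul]
lemma auxG_gen1 : auxG (X 0 ^ 2) = X 0 ^ 2 * X 2 ^ 2 := by
  rw [map_pow, auxG_X0, mul_pow]
lemma auxG_gen2 : auxG (X 0 * X 1) = X 0 * X 1 * X 2 ^ 2 := by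
  rw [map_mul, auxG_X0, auxG_X1]; ring
lemma auxG_gen3 : auxG (X 1 ^ 2) = X 1 ^ 2 * X 2 ^ 2 := by
  rw [map_pow, auxG_X1, mul_pow]
lemma auxG_gen4 : auxG (X 2) = X 2 ^ 4 * X 3 := auxG_X2


lemma aux_map_eq :
    hondaInvariantRing.map auxF = wps112CoordRing.map auxG := by
  rw [hondaInvariantRing, wps112CoordRing, AlgHom.map_adjoin, AlgHom.map_adjoin]
  congr 1
  rw [Set.image_insert_eq, Set.image_insert_eq, Set.image_insert_eq,
    Set.image_singleton, Set.image_insert_eq, Set.image_insert_eq,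
    Set.image_insert_eq, Set.image_singleton,
    auxF_gen1, auxF_gen2, auxF_gen3, auxF_gen4,
    auxG_gen1, auxG_gen2, auxG_gen3, auxG_gen4]

lemma auxF_injective : Function.Injective auxF :=
  AddMonoidAlgebra.mapDomain_injective auxPhi_injective

lemma auxG_injective : Function.Injective auxG :=
  AddMonoidAlgebra.mapDomain_injective auxPsi_injective

/-- There is a ℂ-algebra isomorphism between the subalgebra of
`ℂ[X,Y,Z,W]` generated by `X²Z, XYZ, Y²Z, Z²W` and the subalgebra of `ℂ[X,Y,Z]`
generated by `X², XY, Y², Z` sending `X²Z ↦ X²`, `XYZ ↦ XY`, `Y²Z ↦ Y²`,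
`Z²W ↦ Z`. -/
theorem honda_invariant_ring_iso_wps112_coord_ring :
    ∃ e : hondaInvariantRing ≃ₐ[ℂ] wps112CoordRing,
      ((e ⟨X 0 ^ 2 * X 2, Algebra.subset_adjoin (by simp)⟩ :
          wps112CoordRing) : MvPolynomial (Fin 3) ℂ) = X 0 ^ 2 ∧
      ((e ⟨X 0 * X 1 * X 2, Algebra.subset_adjoin (by simp)⟩ :
          wps112CoordRing) : MvPolynomial (Fin 3) ℂ) = X 0 * X 1 ∧
      ((e ⟨X 1 ^ 2 * X 2, Algebra.subset_adjoin (by simp)⟩ :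
          wps112CoordRing) : MvPolynomial (Fin 3) ℂ) = X 1 ^ 2 ∧
      ((e ⟨X 2 ^ 2 * X 3, Algebra.subset_adjoin (by simp)⟩ :
          wps112CoordRing) : MvPolynomial (Fin 3) ℂ) = X 2 := by
  set eF := hondaInvariantRing.equivMapOfInjective auxF auxF_injective with heF
  set eG := wps112CoordRing.equivMapOfInjective auxG auxG_injective with heG
  set eQ := Subalgebra.equivOfEq _ _ aux_map_eq with heQ
  have key : ∀ x : hondaInvariantRing,
      auxG (((eF.trans (eQ.trans eG.symm)) x : wps112CoordRing) :
        MvPolynomial (Fin 3) ℂ) = auxF (x : MvPolynomial (Fin 4) ℂ) := by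
    intro x
    simp only [AlgEquiv.trans_apply]
    have h1 : ∀ y : wps112CoordRing.map auxG,
        auxG ((eG.symm y : wps112CoordRing) : MvPolynomial (Fin 3) ℂ)
          = (y : MvPolynomial (Fin 4) ℂ) := by
      intro y
      have := Subalgebra.coe_equivMapOfInjective_apply _ auxG auxG_injective (eG.symm y)
      rw [show wps112CoordRing.equivMapOfInjective auxG auxG_injective (eG.symm y) = y from
        eG.apply_symm_apply y] at this
      exact this.symm
    rw [h1]
    have h2 : ((eQ (eF x) : wps112CoordRing.map auxG) : MvPolynomial (Fin 4) ℂ)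
        = ((eF x : hondaInvariantRing.map auxF) : MvPolynomial (Fin 4) ℂ) := rfl
    rw [h2]
    exact Subalgebra.coe_equivMapOfInjective_apply _ auxF auxF_injective x
  refine ⟨eF.trans (eQ.trans eG.symm), ?_, ?_, ?_, ?_⟩ <;>
  · apply auxG_injective
    rw [key]
    simp only [auxF_gen1, auxF_gen2, auxF_gen3, auxF_gen4,
      auxG_gen1, auxG_gen2, auxG_gen3, auxG_gen4]
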